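/- arXiv:2309.00909 — 4 statements merged into one kernel-verified Lean document; each statement's English description precedes it below -/
import Mathlib

section
/- Fix ρ̃ > 0, λ > 0, γ^f > 0, and let f(θ) and q(θ) be continuous with q decreasing, q(0)=1, lim_{θ→∞} q(θ)=0, f(θ)=θq(θ). Define Γ^{na} = γ^f/(1+γ^f), Γ^{nb}(θ) = γ^f(1-q(θ))/(1+γ^f+q(θ)(1-γ^f)), and the corresponding actual powers Ψ^{na}(θ) = Γ^{na}(ρ̃+λ+f(θ))/(ρ̃+λ+Γ^{na}f(θ)), Ψ^{nb}(θ) = Γ^{nb}(θ)(ρ̃+λ+f(θ))/(ρ̃+λ+Γ^{nb}(θ)f(θ)). Then Ψ^{na}(θ) ≥ Ψ^{nb}(θ) for all θ ≥ 0. -/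
/-- with q continuous decreasing from 1 to 0, f(θ)=θq(θ),
the actual bargaining powers satisfy Ψ^{na}(θ) ≥ Ψ^{nb}(θ) for all θ ≥ 0. -/
theorem stmt_3 (ρt lam γf : ℝ) (hρ : 0 < ρt) (hlam : 0 < lam) (hγ : 0 < γf)
    (f q : ℝ → ℝ) (hfc : Continuous f) (hqc : Continuous q)
    (hqdec : Antitone q) (hq0 : q 0 = 1)
    (hqlim : Filter.Tendsto q Filter.atTop (nhds 0))
    (hfq : ∀ θ, f θ = θ * q θ) :
    ∀ θ : ℝ, 0 ≤ θ →
      let Γna := γf / (1 + γf)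
      let Γnb := γf * (1 - q θ) / (1 + γf + q θ * (1 - γf))
      Γnb * (ρt + lam + f θ) / (ρt + lam + Γnb * f θ) ≤
        Γna * (ρt + lam + f θ) / (ρt + lam + Γna * f θ) := by
  intro θ hθ Γna Γnb
  -- q θ ∈ [0,1]
  have hq1 : q θ ≤ 1 := hq0 ▸ hqdec hθ
  have hq_nonneg : 0 ≤ q θ := by
    refine le_of_tendsto hqlim ?_
    filter_upwards [Filter.eventually_ge_atTop θ] with t ht using hqdec ht
  -- denominators positive
  have hd1 : (0:ℝ) < 1 + γf := by linarith
  have hd2 : (0:ℝ) < 1 + γf + q θ * (1 - γf) := by nlinarith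
  -- f θ ≥ 0
  have hf : 0 ≤ f θ := by rw [hfq]; positivity
  -- Γna, Γnb bounds
  have hΓna_nonneg : 0 ≤ Γna := by positivity
  have hΓnb_nonneg : 0 ≤ Γnb := by
    apply div_nonneg _ hd2.le
    nlinarith
  have hle : Γnb ≤ Γna := by
    rw [div_le_div_iff₀ hd2 hd1]
    nlinarith
  -- monotonicity of Ψ in Γ
  have hden1 : 0 < ρt + lam + Γnb * f θ := by positivity
  have hden2 : 0 < ρt + lam + Γna * f θ := by positivity
  rw [div_le_div_iff₀ hden1 hden2]
  have key : 0 ≤ (Γna - Γnb) * (ρt + lam + f θ) * (ρt + lam) := by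
    apply mul_nonneg (mul_nonneg (by linarith) (by linarith)); linarith
  nlinarith [key]
end

section
/- Let σ > 0, σ ≠ 1, α > 0, and define for an employment level L and automation levels m, ṁ, Ṁ the technological unemployment U^A = L(1 − e^{α(σ−1)(Ṁ−ṁ)} · (e^{α(σ−1)(m+ṁ)}−1)/(e^{α(σ−1)m}−1)). Then ∂(U^A/L)/∂m = 0 when ṁ = 0, and ∂(U^A/L)/∂Ṁ < 0 if σ > 1 while ∂(U^A/L)/∂Ṁ > 0 if σ ∈ (0,1) (evaluated at ṁ = 0, Ṁ = 0). -/
/-- for the technological unemployment rate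
U^A/L = 1 − e^{α(σ−1)(Ṁ−ṁ)}(e^{α(σ−1)(m+ṁ)}−1)/(e^{α(σ−1)m}−1):
its partial derivative in m is 0 when ṁ = 0, and its partial derivative in Ṁ at
ṁ = 0, Ṁ = 0 is negative if σ > 1 and positive if σ ∈ (0,1). -/
theorem stmt_10 (σ α : ℝ) (hσ : 0 < σ) (hσ1 : σ ≠ 1) (hα : 0 < α) :
    let F : ℝ → ℝ → ℝ → ℝ := fun m mdot Mdot =>
      1 - Real.exp (α * (σ - 1) * (Mdot - mdot)) *
        (Real.exp (α * (σ - 1) * (m + mdot)) - 1) / (Real.exp (α * (σ - 1) * m) - 1)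
    (∀ m Mdot : ℝ, m ∈ Set.Ioo (0:ℝ) 1 → HasDerivAt (fun m' => F m' 0 Mdot) 0 m) ∧
    (∀ m : ℝ, m ∈ Set.Ioo (0:ℝ) 1 →
      (1 < σ → deriv (fun Mdot => F m 0 Mdot) 0 < 0) ∧
      (σ < 1 → 0 < deriv (fun Mdot => F m 0 Mdot) 0)) := by
  intro F
  set c := α * (σ - 1) with hc
  have hc0 : c ≠ 0 := by
    have : σ - 1 ≠ 0 := sub_ne_zero.mpr hσ1
    exact mul_ne_zero (ne_of_gt hα) this
  have hk : ∀ m' : ℝ, m' ≠ 0 → Real.exp (c * m') - 1 ≠ 0 := by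
    intro m' hm'
    have : Real.exp (c * m') ≠ 1 := by
      simp only [ne_eq, Real.exp_eq_one_iff]
      exact mul_ne_zero hc0 hm'
    exact sub_ne_zero.mpr this
  constructor
  · intro m Mdot hm
    have hconst : HasDerivAt (fun _ : ℝ => 1 - Real.exp (c * (Mdot - 0))) 0 m :=
      hasDerivAt_const _ _
    refine hconst.congr_of_eventuallyEq ?_
    have hpos : ∀ᶠ m' in nhds m, (0:ℝ) < m' :=
      Filter.Tendsto.eventually_const_lt hm.1 Filter.tendsto_id
    filter_upwards [hpos] with m' hm'
    show 1 - Real.exp (c * (Mdot - 0)) * (Real.exp (c * (m' + 0)) - 1) /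
        (Real.exp (c * m') - 1) = 1 - Real.exp (c * (Mdot - 0))
    rw [add_zero, mul_div_assoc, div_self (hk m' (ne_of_gt hm')), mul_one]
  · intro m hm
    have hkm := hk m (ne_of_gt hm.1)
    have heq : (fun Mdot => F m 0 Mdot) = fun Mdot => 1 - Real.exp (c * Mdot) := by
      funext Mdot
      show 1 - Real.exp (c * (Mdot - 0)) * (Real.exp (c * (m + 0)) - 1) /
          (Real.exp (c * m) - 1) = _
      rw [add_zero, sub_zero, mul_div_assoc, div_self hkm, mul_one]
    have hd : HasDerivAt (fun Mdot => 1 - Real.exp (c * Mdot)) (-c) 0 := by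
      have h1 : HasDerivAt (fun Mdot : ℝ => c * Mdot) c 0 := by
        simpa using (hasDerivAt_id (0:ℝ)).const_mul c
      have h2 := h1.exp
      have h3 := h2.const_sub 1
      simpa using h3
    have hderiv : deriv (fun Mdot => F m 0 Mdot) 0 = -c := by
      rw [heq]; exact hd.deriv
    rw [hderiv]
    constructor
    · intro h1σ
      have : 0 < c := mul_pos hα (by linarith)
      linarith
    · intro hσlt
      have : c < 0 := mul_neg_of_pos_of_neg hα (by linarith)
      linarith
end

section
/- Let σ > 0, σ ≠ 1, α > 0, m ∈ (0,1), and define h(ṁ) = e^{-α(σ−1)ṁ}·(e^{α(σ−1)(m+ṁ)}−1)/(e^{α(σ−1)m}−1). Then h(0) = 1 and h is strictly increasing in ṁ in a neighborhood of 0; consequently U^A/L = 1 − h(ṁ) (with Ṁ = 0) is strictly decreasing in ṁ near 0, for both σ > 1 and σ ∈ (0,1). -/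
/-- with s = α(σ−1) and h(ṁ) = e^{−sṁ}(e^{s(m+ṁ)}−1)/(e^{sm}−1), we have
h(0) = 1 and h strictly increasing near 0, so U^A/L = 1 − h(ṁ) is strictly decreasing
near 0, for both σ > 1 and σ ∈ (0,1). -/
theorem stmt_11 (σ α m : ℝ) (hσ : 0 < σ) (hσ1 : σ ≠ 1) (hα : 0 < α)
    (hm : m ∈ Set.Ioo (0:ℝ) 1) :
    let s : ℝ := α * (σ - 1)
    let h : ℝ → ℝ := fun mdot =>
      Real.exp (-s * mdot) * (Real.exp (s * (m + mdot)) - 1) / (Real.exp (s * m) - 1)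
    h 0 = 1 ∧
    (∃ ε : ℝ, 0 < ε ∧ StrictMonoOn h (Set.Ioo (-ε) ε)) ∧
    (∃ ε : ℝ, 0 < ε ∧ StrictAntiOn (fun mdot => 1 - h mdot) (Set.Ioo (-ε) ε)) := by
  obtain ⟨hm0, hm1⟩ := hm
  intro s h
  have hs : s ≠ 0 := mul_ne_zero hα.ne' (sub_ne_zero.2 hσ1)
  have hsm : s * m ≠ 0 := mul_ne_zero hs hm0.ne'
  have hD : Real.exp (s * m) - 1 ≠ 0 := by
    intro he
    exact hsm ((Real.exp_eq_one_iff _).1 (by linarith))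
  have key : ∀ x, h x = (Real.exp (s * m) - Real.exp (-s * x)) / (Real.exp (s * m) - 1) := by
    intro x
    simp only [h]
    rw [mul_sub, mul_one, ← Real.exp_add]
    have : -s * x + s * (m + x) = s * m := by ring
    rw [this]
  have hmono : StrictMono h := by
    intro x y hxy
    rw [key, key]
    rcases lt_or_gt_of_ne hs with hneg | hpos
    · have hsm' : s * m < 0 := mul_neg_of_neg_of_pos hneg hm0
      have hDneg : Real.exp (s * m) - 1 < 0 := by
        have := Real.exp_lt_one_iff.2 hsm'; linarith
      have hinv : (Real.exp (s * m) - 1)⁻¹ < 0 := inv_lt_zero.2 hDneg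
      have hlt : Real.exp (-s * x) < Real.exp (-s * y) := by
        apply Real.exp_lt_exp.2; nlinarith
      rw [div_eq_mul_inv, div_eq_mul_inv]
      nlinarith
    · have hsm' : 0 < s * m := mul_pos hpos hm0
      have hDpos : 0 < Real.exp (s * m) - 1 := by
        have := Real.one_lt_exp_iff.2 hsm'; linarith
      rw [div_lt_div_iff₀ hDpos hDpos]
      have : Real.exp (-s * y) < Real.exp (-s * x) := by
        apply Real.exp_lt_exp.2; nlinarith
      nlinarith
  refine ⟨?_, ⟨1, one_pos, hmono.strictMonoOn _⟩,
    ⟨1, one_pos, fun x hx y hy hxy => by simpa using hmono hxy⟩⟩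
  rw [key 0]
  simp only [mul_zero, Real.exp_zero]
  exact div_self hD
end

section
/- Let s = α(σ−1) with σ ∈ (0,1), α > 0, and define, for q in a suitable interval, m̄(q) implicitly by (1+μ*)^{σ−1} = (δ(1+0)·c/q)^{1−σ}[1 − m̄ + (e^{s·m̄}−1)/s] where c = δD^{a₀}/A^k. Using the second-order Taylor approximation e^{sm} ≈ 1 + sm + s²m²/2, one gets m̄(q) ≈ sqrt( (2/(α(1−σ))) · [1 − (δ(1+μ*)D^{a₀}/(A^k q))^{σ−1}] ), and this approximate m̄(q) is strictly decreasing in q on the interval where the expression under the square root is in (0,1), with m̄(q̄) = 0 at q̄ = δ(1+μ*)D^{a₀}/A^k. -/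
/-- the Taylor-approximate automation-region boundary
m̄(q) = √( (2/(α(1−σ)))·[1 − (δ(1+μ*)D^{a₀}/(A^k q))^{σ−1}] )
vanishes at q̄ = δ(1+μ*)D^{a₀}/A^k and is strictly decreasing in q on the set where
the expression under the square root lies in (0,1). -/
theorem stmt_16 (α σ δ μstar D A : ℝ) (hα : 0 < α) (hσ : σ ∈ Set.Ioo (0:ℝ) 1)
    (hδ : 0 < δ) (hμ : 0 < μstar) (hD : 0 < D) (hA : 0 < A) :
    let inner : ℝ → ℝ := fun q =>
      (2 / (α * (1 - σ))) * (1 - (δ * (1 + μstar) * D / (A * q)) ^ (σ - 1))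
    let mbar : ℝ → ℝ := fun q => Real.sqrt (inner q)
    let qbar : ℝ := δ * (1 + μstar) * D / A
    mbar qbar = 0 ∧
    StrictAntiOn mbar {q : ℝ | 0 < q ∧ inner q ∈ Set.Ioo (0:ℝ) 1} := by
  intro inner mbar qbar
  obtain ⟨hσ0, hσ1⟩ := hσ
  have h1σ : (0:ℝ) < 1 - σ := by linarith
  have hk : (0:ℝ) < δ * (1 + μstar) * D := by positivity
  have hC : (0:ℝ) < 2 / (α * (1 - σ)) := by positivity
  constructor
  · show Real.sqrt _ = 0
    have h1 : δ * (1 + μstar) * D / (A * qbar) = 1 := by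
      field_simp [qbar]
      show _ = A * (δ * (1 + μstar) * D / A)
      field_simp
    simp only [inner, h1, Real.one_rpow, sub_self, mul_zero, Real.sqrt_zero]
  · intro q1 hq1 q2 hq2 hlt
    obtain ⟨hq1p, -⟩ := hq1
    obtain ⟨hq2p, hq2i⟩ := hq2
    have h12 : inner q2 < inner q1 := by
      have hb1 : 0 < δ * (1 + μstar) * D / (A * q1) := by positivity
      have hb : δ * (1 + μstar) * D / (A * q1) > δ * (1 + μstar) * D / (A * q2) := by
        apply div_lt_div_of_pos_left hk (by positivity)
        exact mul_lt_mul_of_pos_left hlt hA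
      have hr : (δ * (1 + μstar) * D / (A * q1)) ^ (σ - 1)
          < (δ * (1 + μstar) * D / (A * q2)) ^ (σ - 1) :=
        Real.rpow_lt_rpow_of_neg (by positivity) hb (by linarith)
      have : (1 - (δ * (1 + μstar) * D / (A * q2)) ^ (σ - 1))
          < (1 - (δ * (1 + μstar) * D / (A * q1)) ^ (σ - 1)) := by linarith
      exact mul_lt_mul_of_pos_left this hC
    exact Real.sqrt_lt_sqrt hq2i.1.le h12
end
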